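/- arXiv:2208.03503 — 2 statements merged into one kernel-verified Lean document; each statement's English description precedes it below -/
import Mathlib

section
/- Let n ≥ 1, let i be an integer, let ⋆ be a multiplicative Lie algebra structure on the dihedral group Dₙ satisfying a⋆b = bⁱ, let f be a normalized 2-cocycle on Dₙ with values in ℂˣ, and let h be a multiplicative Lie partner of f with respect to ⋆. Then for all integers j, k one has h(bʲ, a·bᵏ) = h(bʲ, a) and h(a·bᵏ, bʲ) = h(a, bʲ). -/
/-!
For fixed `x`, the elements `z` with `x ⋆ z = 1` form a subgroup, and so do the elements `x`
with `x ⋆ z = 1` for fixed `z`; since `b ⋆ b = 1`, it follows that `⋆` vanishes on all pairs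
of powers of `b`. Whenever `x ⋆ z = 1` the cocycle correction terms in the partner axioms cancel,
so `h` is multiplicative in each argument along these subgroups. Hence `h` vanishes on pairs of
powers of `b`, and `h(bʲ, a·bᵏ) = h(bʲ, a)·h(bʲ, bᵏ) = h(bʲ, a)`, and symmetrically.
-/

/-- A multiplicative Lie algebra structure on a group `K` is a map `⋆ : K × K → K`
satisfying the five axioms below (writing `ˣy` for `x * y * x⁻¹`). -/
def IsMulLieStructure {K : Type*} [Group K] (star : K → K → K) : Prop :=
  (∀ x : K, star x x = 1) ∧
  (∀ x y z : K, star x (y * z) = star x y * (y * star x z * y⁻¹)) ∧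
  (∀ x y z : K, star (x * y) z = (x * star y z * x⁻¹) * star x z) ∧
  (∀ x y z : K,
    star (star x y) (y * z * y⁻¹) * star (star y z) (z * x * z⁻¹) *
      star (star z x) (x * y * x⁻¹) = 1) ∧
  (∀ x y z : K, z * star x y * z⁻¹ = star (z * x * z⁻¹) (z * y * z⁻¹))

/-- A normalized 2-cocycle on a group `K` with values in `ℂˣ` (trivial action). -/
def IsNormalizedCocycle {K : Type*} [Group K] (f : K → K → ℂˣ) : Prop :=
  (∀ x y z : K, f x y * f (x * y) z = f y z * f x (y * z)) ∧
  (∀ x : K, f x 1 = 1 ∧ f 1 x = 1)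

/-- `h` is a multiplicative Lie partner of the 2-cocycle `f` with respect to the
multiplicative Lie algebra structure `star` on `K`. -/
def IsMulLiePartner {K : Type*} [Group K] (star : K → K → K)
    (f h : K → K → ℂˣ) : Prop :=
  (∀ x : K, h x 1 = 1 ∧ h 1 x = 1 ∧ h x x = 1) ∧
  (∀ x y z : K, h x (y * z) =
    h x y * h x z * (f y⁻¹ y)⁻¹ * f y (star x z) * f (y * star x z) y⁻¹ *
      f (star x y) (y * star x z * y⁻¹)) ∧
  (∀ x y z : K, h (x * y) z =
    h y z * h x z * (f x⁻¹ x)⁻¹ * f x (star y z) * f (x * star y z) x⁻¹ *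
      f (x * star y z * x⁻¹) (star x z)) ∧
  (∀ x y z : K,
    h (star y x) (x * z * x⁻¹) * h (star x z) (z * y * z⁻¹) * h (star z y) (y * x * y⁻¹) *
      f (star (star y x) (x * z * x⁻¹)) (star (star x z) (z * y * z⁻¹)) *
      f (star (star y x) (x * z * x⁻¹) * star (star x z) (z * y * z⁻¹))
        (star (star z y) (y * x * y⁻¹)) = 1) ∧
  (∀ x y z : K, h (z * x * z⁻¹) (z * y * z⁻¹) =
    h x y * f z (star x y) * (f z⁻¹ z)⁻¹ * f (z * star x y) z⁻¹)

/-- The reflection `a = sr 0` of the dihedral group `Dₙ`. -/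
def Da (n : ℕ) : DihedralGroup n := DihedralGroup.sr 0

/-- The rotation `b = r 1` of the dihedral group `Dₙ`. -/
def Db (n : ℕ) : DihedralGroup n := DihedralGroup.r 1

variable {K : Type*} [Group K] {star : K → K → K}

namespace IsMulLieStructure

variable (hstar : IsMulLieStructure star)
include hstar

theorem star_one_right (x : K) : star x 1 = 1 := by
  have h := hstar.2.1 x 1 1
  simp only [one_mul, inv_one, mul_one] at h
  exact left_eq_mul.mp h

theorem star_one_left (z : K) : star 1 z = 1 := by
  have h := hstar.2.2.1 1 1 z
  simp only [one_mul, inv_one, mul_one] at h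
  exact left_eq_mul.mp h

def rightAnnihilator (x : K) : Subgroup K where
  carrier := {z | star x z = 1}
  one_mem' := hstar.star_one_right x
  mul_mem' {y z} hy hz := by
    change star x (y * z) = 1
    rw [hstar.2.1, show star x y = 1 from hy, show star x z = 1 from hz]
    group
  inv_mem' {z} hz := by
    have h := hstar.2.1 x z z⁻¹
    rw [mul_inv_cancel, hstar.star_one_right, show star x z = 1 from hz, one_mul] at h
    exact conj_eq_one_iff.mp h.symm

def leftAnnihilator (z : K) : Subgroup K where
  carrier := {x | star x z = 1}
  one_mem' := hstar.star_one_left z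
  mul_mem' {x y} hx hy := by
    change star (x * y) z = 1
    rw [hstar.2.2.1, show star x z = 1 from hx, show star y z = 1 from hy]
    group
  inv_mem' {x} hx := by
    have h := hstar.2.2.1 x x⁻¹ z
    rw [mul_inv_cancel, hstar.star_one_left, show star x z = 1 from hx, mul_one] at h
    exact conj_eq_one_iff.mp h.symm

theorem star_zpow_zpow (g : K) (j k : ℤ) : star (g ^ j) (g ^ k) = 1 :=
  have hk : g ^ k ∈ hstar.rightAnnihilator g := zpow_mem (hstar.1 g) k
  zpow_mem (show g ∈ hstar.leftAnnihilator (g ^ k) from hk) j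

end IsMulLieStructure

theorem IsNormalizedCocycle.apply_self_inv {f : K → K → ℂˣ} (hf : IsNormalizedCocycle f)
    (y : K) : f y y⁻¹ = f y⁻¹ y := by
  simpa [hf.2] using hf.1 y y⁻¹ y

namespace IsMulLiePartner

variable {f h : K → K → ℂˣ} (hstar : IsMulLieStructure star) (hf : IsNormalizedCocycle f)
  (hh : IsMulLiePartner star f h)

section
include hf hh

theorem mul_right_of_star_eq_one {x z : K} (hz : star x z = 1) (y : K) :
    h x (y * z) = h x y * h x z := by
  rw [hh.2.1, hz]
  simp [hf.2, hf.apply_self_inv y]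

theorem mul_left_of_star_eq_one {y z : K} (hy : star y z = 1) (x : K) :
    h (x * y) z = h x z * h y z := by
  rw [hh.2.2.1, hy]
  simp [hf.2, hf.apply_self_inv x, mul_comm]

end

def rightHom (x : K) : hstar.rightAnnihilator x →* ℂˣ where
  toFun z := h x z
  map_one' := (hh.1 x).1
  map_mul' y z := hh.mul_right_of_star_eq_one hf z.2 y

def leftHom (z : K) : hstar.leftAnnihilator z →* ℂˣ where
  toFun x := h x z
  map_one' := (hh.1 z).2.1
  map_mul' x y := hh.mul_left_of_star_eq_one hf y.2 x

include hstar hf hh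

theorem zpow_right {x z : K} (hz : star x z = 1) (k : ℤ) : h x (z ^ k) = h x z ^ k :=
  map_zpow (rightHom hstar hf hh x) ⟨z, hz⟩ k

theorem zpow_left {x z : K} (hx : star x z = 1) (j : ℤ) : h (x ^ j) z = h x z ^ j :=
  map_zpow (leftHom hstar hf hh z) ⟨x, hx⟩ j

theorem zpow_zpow_eq_one (g : K) (j k : ℤ) : h (g ^ j) (g ^ k) = 1 := by
  have hg : star (g ^ j) g = 1 := by simpa using hstar.star_zpow_zpow g j 1
  rw [hh.zpow_right hstar hf hg, hh.zpow_left hstar hf (hstar.1 g), (hh.1 g).2.2, one_zpow,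
    one_zpow]

theorem zpow_mul_zpow_right (a g : K) (j k : ℤ) : h (g ^ j) (a * g ^ k) = h (g ^ j) a := by
  rw [hh.mul_right_of_star_eq_one hf (hstar.star_zpow_zpow g j k),
    hh.zpow_zpow_eq_one hstar hf, mul_one]

theorem mul_zpow_zpow_left (a g : K) (j k : ℤ) : h (a * g ^ k) (g ^ j) = h a (g ^ j) := by
  rw [hh.mul_left_of_star_eq_one hf (hstar.star_zpow_zpow g k j),
    hh.zpow_zpow_eq_one hstar hf, mul_one]

end IsMulLiePartner

theorem dihedral_partner_rotation_reflection_general (n : ℕ)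
    (star : DihedralGroup n → DihedralGroup n → DihedralGroup n)
    (hstar : IsMulLieStructure star)
    (f h : DihedralGroup n → DihedralGroup n → ℂˣ)
    (hf : IsNormalizedCocycle f)
    (hh : IsMulLiePartner star f h) :
    ∀ j k : ℤ,
      h ((Db n) ^ j) (Da n * (Db n) ^ k) = h ((Db n) ^ j) (Da n) ∧
      h (Da n * (Db n) ^ k) ((Db n) ^ j) = h (Da n) ((Db n) ^ j) := fun j k =>
  ⟨hh.zpow_mul_zpow_right hstar hf _ _ j k, hh.mul_zpow_zpow_left hstar hf _ _ j k⟩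

theorem dihedral_partner_rotation_reflection (n : ℕ) (hn : 1 ≤ n) (i : ℤ)
    (star : DihedralGroup n → DihedralGroup n → DihedralGroup n)
    (hstar : IsMulLieStructure star)
    (hab : star (Da n) (Db n) = (Db n) ^ i)
    (f h : DihedralGroup n → DihedralGroup n → ℂˣ)
    (hf : IsNormalizedCocycle f)
    (hh : IsMulLiePartner star f h) :
    ∀ j k : ℤ,
      h ((Db n) ^ j) (Da n * (Db n) ^ k) = h ((Db n) ^ j) (Da n) ∧
      h (Da n * (Db n) ^ k) ((Db n) ^ j) = h (Da n) ((Db n) ^ j) :=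
  dihedral_partner_rotation_reflection_general n star hstar f h hf hh
end

section
/- Let n ≥ 2, let i be an integer, and let ⋆ be a multiplicative Lie algebra structure on the generalized quaternion group Qₙ satisfying a⋆b = bⁱ. Then for all integers p one has a⋆bᵖ = bⁱᵖ and bᵖ⋆a = b⁻ⁱᵖ. -/
/-- The element `a` of the generalized quaternion group `Qₙ` (with `a² = bⁿ`). -/
def Qa (n : ℕ) : QuaternionGroup n := QuaternionGroup.xa 0

/-- The element `b` of order `2n` of the generalized quaternion group `Qₙ`. -/
def Qb (n : ℕ) : QuaternionGroup n := QuaternionGroup.a 1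

/-!
Axiom (ii) makes `z ↦ x ⋆ z` a crossed homomorphism, so on the powers of an element `y`
commuting with `x ⋆ y` it is an honest homomorphism: `x ⋆ yᵖ = (x ⋆ y)ᵖ`. With `a ⋆ b = bⁱ`
this gives `a ⋆ bᵖ = bⁱᵖ`, and `bᵖ ⋆ a = (a ⋆ bᵖ)⁻¹` because `⋆` is antisymmetric.
-/

namespace IsMulLieStructure

variable {K : Type*} [Group K] {star : K → K → K}

lemma star_one (h : IsMulLieStructure star) (x : K) : star x 1 = 1 := by
  have h1 := h.2.1 x 1 1
  simp only [one_mul, inv_one, mul_one] at h1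
  exact mul_eq_left.mp h1.symm

lemma star_swap (h : IsMulLieStructure star) (x y : K) : star y x = (star x y)⁻¹ := by
  obtain ⟨h_self, h_right, h_left, -, -⟩ := h
  have hxy := h_self (x * y)
  rw [h_left x y (x * y), h_right y x y, h_right x x y, h_self y, h_self x] at hxy
  have hconj : x * (star y x * star x y) * x⁻¹ = 1 := by
    rw [← hxy]; group
  rw [conj_eq_one_iff] at hconj
  exact eq_inv_of_mul_eq_one_left hconj

lemma star_zpow_of_commute (h : IsMulLieStructure star) {x y : K}
    (hy : Commute y (star x y)) (p : ℤ) : star x (y ^ p) = star x y ^ p := by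
  have hstep : ∀ q : ℤ, star x (y ^ (q + 1)) = star x (y ^ q) * star x y := fun q => by
    rw [zpow_add_one, h.2.1, (hy.zpow_left q).eq, mul_inv_cancel_right]
  induction p using Int.induction_on with
  | zero => simpa using h.star_one x
  | succ k ih => rw [hstep, ih, zpow_add_one]
  | pred k ih =>
    have hk := hstep (-(k : ℤ) - 1)
    rw [sub_add_cancel, ih] at hk
    rw [eq_mul_inv_of_mul_eq hk.symm, zpow_sub_one]

end IsMulLieStructure

theorem quaternion_star_powers_general (n : ℕ) (i : ℤ)
    (star : QuaternionGroup n → QuaternionGroup n → QuaternionGroup n)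
    (hstar : IsMulLieStructure star)
    (hab : star (Qa n) (Qb n) = (Qb n) ^ i) :
    ∀ p : ℤ,
      star (Qa n) ((Qb n) ^ p) = (Qb n) ^ (i * p) ∧
      star ((Qb n) ^ p) (Qa n) = (Qb n) ^ (-(i * p)) := by
  intro p
  have hcomm : Commute (Qb n) (star (Qa n) (Qb n)) := hab ▸ Commute.self_zpow (Qb n) i
  have hpow : star (Qa n) (Qb n ^ p) = Qb n ^ (i * p) := by
    rw [hstar.star_zpow_of_commute hcomm, hab, zpow_mul]
  exact ⟨hpow, by rw [hstar.star_swap, hpow, zpow_neg]⟩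

theorem quaternion_star_powers (n : ℕ) (hn : 2 ≤ n) (i : ℤ)
    (star : QuaternionGroup n → QuaternionGroup n → QuaternionGroup n)
    (hstar : IsMulLieStructure star)
    (hab : star (Qa n) (Qb n) = (Qb n) ^ i) :
    ∀ p : ℤ,
      star (Qa n) ((Qb n) ^ p) = (Qb n) ^ (i * p) ∧
      star ((Qb n) ^ p) (Qa n) = (Qb n) ^ (-(i * p)) :=
  quaternion_star_powers_general n i star hstar hab
end
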